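/- Let ε1, ε1', ε2 ∈ (0,1), k ≥ 1, Δ_D, Δ_QT ≥ 0, let P ⊂ ℝ^d be finite nonempty with |P| = n, let X, X* ⊂ ℝ^d with |X| = |X*| = k, and let π1 : ℝ^d → ℝ^{d1} and π3 : ℝ^{d1} → ℝ^{d2} be maps. Suppose: (i) (1/(1+ε1)²)·cost(P,X) ≤ cost(π1(P),π1(X)) ≤ (1+ε1)²·cost(P,X), and likewise with X* in place of X; (ii) a triple (S,Δ,w), with S ⊂ ℝ^{d1} finite nonempty, w : S → [0,∞) with Σ_{q∈S} w(q) = n, and Δ ∈ ℝ, satisfies (1−ε2)·cost(π1(P),Y) ≤ cost((S,Δ,w),Y) ≤ (1+ε2)·cost(π1(P),Y) for every finite nonempty Y ⊂ ℝ^{d1} with |Y| ≤ k; (iii) (1/(1+ε1')²)·cost((S,Δ,w),π1(X)) ≤ cost((π3(S),Δ,w),π3(π1(X))) ≤ (1+ε1')²·cost((S,Δ,w),π1(X)), and likewise with X* in place of X; (iv) Γ : S → ℝ^{d2} satisfies ‖π3(q) − Γ(q)‖ ≤ Δ_QT for every q ∈ S, and ‖π3(q)−y‖ ≤ Δ_D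 and ‖Γ(q)−y‖ ≤ Δ_D for every q ∈ S and every y ∈ π3(π1(X)) ∪ π3(π1(X*)); (v) X' := π3(π1(X)) satisfies cost((Γ(S),Δ,w),X') ≤ cost((Γ(S),Δ,w),Y) for every finite nonempty Y ⊂ ℝ^{d2} with |Y| ≤ k. Then cost(P,X) ≤ ((1+ε1)^4·(1+ε2)·(1+ε1')^4/(1−ε2))·cost(P,X*) + ((1+ε1)²·(1+ε1')²/(1−ε2))·4·n·Δ_D·Δ_QT. (Theorem 13, part 3: the quantization-added JL+FSS+JL algorithm, conditioned on the JL and coreset events.) -/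

import Mathlib

open scoped BigOperators

abbrev Pt (d : ℕ) : Type := EuclideanSpace ℝ (Fin d)

/-- Per-point k-means cost: `min_{y ∈ Y} ‖p - y‖²`. -/
noncomputable def ptCost {F : Type*} [NormedAddCommGroup F] (p : F) (Y : Set F) : ℝ :=
  sInf ((fun y => ‖p - y‖ ^ 2) '' Y)

/-- Projected k-means cost: `∑_{p ∈ P} min_{y ∈ Y} ‖π(p) - y‖²` (sum indexed by points of `P`). -/
noncomputable def projCost {E F : Type*} [NormedAddCommGroup F]
    (π : E → F) (P : Finset E) (Y : Set F) : ℝ :=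
  ∑ p ∈ P, ptCost (π p) Y

/-- k-means cost: `∑_{p ∈ P} min_{x ∈ X} ‖p - x‖²`. -/
noncomputable def kmeansCost {F : Type*} [NormedAddCommGroup F]
    (P : Finset F) (X : Set F) : ℝ :=
  ∑ p ∈ P, ptCost p X

/-- Coreset cost (possibly after applying a map `π` to the coreset points):
`∑_{q ∈ S} w(q) · min_{y ∈ Y} ‖π(q) - y‖² + Δ`. -/
noncomputable def coresetCost {E F : Type*} [NormedAddCommGroup F]
    (S : Finset E) (Δ : ℝ) (w : E → ℝ) (π : E → F) (Y : Set F) : ℝ :=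
  (∑ q ∈ S, w q * ptCost (π q) Y) + Δ

/-!
Chain the guarantees from the solution `X` to the benchmark `X*`: the first JL map, the coreset and
the second JL map transport the cost of `X` down to the cost of `π₃(π₁(X))` on the projected
coreset (lower bounds), and symmetrically transport the cost of `π₃(π₁(X*))` up to the cost of `X*`
(upper bounds). In between, `π₃(π₁(X))` is optimal for the quantized coreset `Γ(S)`, and replacing
each `π₃ q` by `Γ q` changes a squared distance to a center by at most `2 Δ_D Δ_QT`, since
`‖a‖² - ‖b‖² = (‖a‖ - ‖b‖)(‖a‖ + ‖b‖)`. Swapping `π₃` for `Γ` and back costs `4 n Δ_D Δ_QT`.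
-/

section Quantization

variable {E F : Type*} [NormedAddCommGroup F]

lemma ptCost_le_sq_norm_sub {Y : Set F} (hY : Y.Finite) (p : F) {y : F} (hy : y ∈ Y) :
    ptCost p Y ≤ ‖p - y‖ ^ 2 :=
  csInf_le (hY.image _).bddBelow ⟨y, hy, rfl⟩

lemma exists_mem_ptCost_eq {Y : Set F} (hY : Y.Finite) (hYne : Y.Nonempty) (p : F) :
    ∃ y ∈ Y, ptCost p Y = ‖p - y‖ ^ 2 := by
  obtain ⟨y, hy, hmin⟩ := (hYne.image fun y => ‖p - y‖ ^ 2).csInf_mem (hY.image _)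
  exact ⟨y, hy, hmin.symm⟩

lemma sq_norm_sub_le_sq_norm_sub_add {a b y : F} {D δ : ℝ} (hab : ‖a - b‖ ≤ δ)
    (ha : ‖a - y‖ ≤ D) (hb : ‖b - y‖ ≤ D) :
    ‖a - y‖ ^ 2 ≤ ‖b - y‖ ^ 2 + 2 * D * δ := by
  have htri : ‖a - y‖ ≤ ‖a - b‖ + ‖b - y‖ := norm_sub_le_norm_sub_add_norm_sub a b y
  nlinarith [norm_nonneg (a - y), norm_nonneg (b - y), norm_nonneg (a - b)]

lemma ptCost_le_ptCost_add {Y : Set F} (hY : Y.Finite) (hYne : Y.Nonempty) {a b : F} {D δ : ℝ}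
    (hab : ‖a - b‖ ≤ δ) (ha : ∀ y ∈ Y, ‖a - y‖ ≤ D) (hb : ∀ y ∈ Y, ‖b - y‖ ≤ D) :
    ptCost a Y ≤ ptCost b Y + 2 * D * δ := by
  obtain ⟨y, hy, hby⟩ := exists_mem_ptCost_eq hY hYne b
  calc ptCost a Y ≤ ‖a - y‖ ^ 2 := ptCost_le_sq_norm_sub hY a hy
    _ ≤ ‖b - y‖ ^ 2 + 2 * D * δ := sq_norm_sub_le_sq_norm_sub_add hab (ha y hy) (hb y hy)
    _ = ptCost b Y + 2 * D * δ := by rw [hby]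

variable (S : Finset E) (Δ : ℝ) {w : E → ℝ}

lemma coresetCost_le_coresetCost_add (hw : ∀ q ∈ S, 0 ≤ w q) {f g : E → F} {Y : Set F}
    (hY : Y.Finite) (hYne : Y.Nonempty) {D δ : ℝ} (hfg : ∀ q ∈ S, ‖f q - g q‖ ≤ δ)
    (hf : ∀ q ∈ S, ∀ y ∈ Y, ‖f q - y‖ ≤ D) (hg : ∀ q ∈ S, ∀ y ∈ Y, ‖g q - y‖ ≤ D) :
    coresetCost S Δ w f Y ≤ coresetCost S Δ w g Y + (∑ q ∈ S, w q) * (2 * D * δ) := by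
  have hpt : ∀ q ∈ S, w q * ptCost (f q) Y ≤ w q * ptCost (g q) Y + w q * (2 * D * δ) :=
    fun q hq => by
      rw [← mul_add]
      exact mul_le_mul_of_nonneg_left
        (ptCost_le_ptCost_add hY hYne (hfg q hq) (hf q hq) (hg q hq)) (hw q hq)
  have hsum := Finset.sum_le_sum hpt
  rw [Finset.sum_add_distrib, ← Finset.sum_mul] at hsum
  unfold coresetCost
  linarith

lemma coresetCost_le_of_quantized_le (hw : ∀ q ∈ S, 0 ≤ w q) {f Γ : E → F} {Y Y' : Set F}
    (hY : Y.Finite) (hYne : Y.Nonempty) (hY' : Y'.Finite) (hY'ne : Y'.Nonempty) {D δ : ℝ}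
    (hfΓ : ∀ q ∈ S, ‖f q - Γ q‖ ≤ δ)
    (hdiam : ∀ q ∈ S, ∀ y ∈ Y ∪ Y', ‖f q - y‖ ≤ D ∧ ‖Γ q - y‖ ≤ D)
    (hopt : coresetCost S Δ w Γ Y ≤ coresetCost S Δ w Γ Y') :
    coresetCost S Δ w f Y ≤ coresetCost S Δ w f Y' + (∑ q ∈ S, w q) * (4 * D * δ) := by
  have hfY := coresetCost_le_coresetCost_add S Δ hw hY hYne hfΓ
    (fun q hq y hy => (hdiam q hq y (.inl hy)).1) (fun q hq y hy => (hdiam q hq y (.inl hy)).2)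
  have hΓY' := coresetCost_le_coresetCost_add S Δ hw hY' hY'ne
    (fun q hq => (norm_sub_rev (Γ q) (f q)).trans_le (hfΓ q hq))
    (fun q hq y hy => (hdiam q hq y (.inr hy)).2) (fun q hq y hy => (hdiam q hq y (.inr hy)).1)
  linarith

end Quantization

lemma le_mul_of_one_div_mul_le {a b c : ℝ} (hc : 0 < c) (h : 1 / c * a ≤ b) : a ≤ c * b := by
  rwa [one_div_mul_eq_div, div_le_iff₀' hc] at h

theorem stmt13_general {d d1 d2 k n : ℕ} (hk : 1 ≤ k) {ε1 ε1' ε2 : ℝ}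
    (hε10 : 0 < ε1) (hε1'0 : 0 < ε1')
    (hε20 : 0 < ε2) (hε21 : ε2 < 1)
    (ΔD ΔQT : ℝ)
    (P : Finset (Pt d))
    (X Xstar : Finset (Pt d)) (hX : X.card = k) (hXstar : Xstar.card = k)
    (π1 : Pt d → Pt d1) (π3 : Pt d1 → Pt d2)
    (S : Finset (Pt d1)) (w : Pt d1 → ℝ) (Δ : ℝ)
    (hw : ∀ q ∈ S, 0 ≤ w q) (hwsum : (∑ q ∈ S, w q) = (n : ℝ))
    (hJL1X : (1 / (1 + ε1) ^ 2) * kmeansCost P (X : Set (Pt d)) ≤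
        projCost π1 P (π1 '' (X : Set (Pt d))) ∧
      projCost π1 P (π1 '' (X : Set (Pt d))) ≤
        (1 + ε1) ^ 2 * kmeansCost P (X : Set (Pt d)))
    (hJL1Xstar : (1 / (1 + ε1) ^ 2) * kmeansCost P (Xstar : Set (Pt d)) ≤
        projCost π1 P (π1 '' (Xstar : Set (Pt d))) ∧
      projCost π1 P (π1 '' (Xstar : Set (Pt d))) ≤
        (1 + ε1) ^ 2 * kmeansCost P (Xstar : Set (Pt d)))
    (hcore : ∀ Y : Finset (Pt d1), Y.Nonempty → Y.card ≤ k →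
      (1 - ε2) * projCost π1 P (Y : Set (Pt d1)) ≤ coresetCost S Δ w id (Y : Set (Pt d1)) ∧
      coresetCost S Δ w id (Y : Set (Pt d1)) ≤ (1 + ε2) * projCost π1 P (Y : Set (Pt d1)))
    (hJL2X : (1 / (1 + ε1') ^ 2) * coresetCost S Δ w id (π1 '' (X : Set (Pt d))) ≤
        coresetCost S Δ w π3 (π3 '' (π1 '' (X : Set (Pt d)))) ∧
      coresetCost S Δ w π3 (π3 '' (π1 '' (X : Set (Pt d)))) ≤
        (1 + ε1') ^ 2 * coresetCost S Δ w id (π1 '' (X : Set (Pt d))))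
    (hJL2Xstar : (1 / (1 + ε1') ^ 2) * coresetCost S Δ w id (π1 '' (Xstar : Set (Pt d))) ≤
        coresetCost S Δ w π3 (π3 '' (π1 '' (Xstar : Set (Pt d)))) ∧
      coresetCost S Δ w π3 (π3 '' (π1 '' (Xstar : Set (Pt d)))) ≤
        (1 + ε1') ^ 2 * coresetCost S Δ w id (π1 '' (Xstar : Set (Pt d))))
    (Γ : Pt d1 → Pt d2)
    (hΓ : ∀ q ∈ S, ‖π3 q - Γ q‖ ≤ ΔQT)
    (hdiam : ∀ q ∈ S, ∀ y ∈ (π3 '' (π1 '' (X : Set (Pt d))) ∪ π3 '' (π1 '' (Xstar : Set (Pt d)))),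
      ‖π3 q - y‖ ≤ ΔD ∧ ‖Γ q - y‖ ≤ ΔD)
    (hopt : ∀ Y : Finset (Pt d2), Y.Nonempty → Y.card ≤ k →
      coresetCost S Δ w Γ (π3 '' (π1 '' (X : Set (Pt d)))) ≤
        coresetCost S Δ w Γ (Y : Set (Pt d2))) :
    kmeansCost P (X : Set (Pt d)) ≤
      ((1 + ε1) ^ 4 * (1 + ε2) * (1 + ε1') ^ 4 / (1 - ε2)) * kmeansCost P (Xstar : Set (Pt d)) +
        ((1 + ε1) ^ 2 * (1 + ε1') ^ 2 / (1 - ε2)) * (4 * (n : ℝ) * ΔD * ΔQT) := by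
  have hXne : X.Nonempty := Finset.card_pos.mp (by omega)
  have hXsne : Xstar.Nonempty := Finset.card_pos.mp (by omega)
  have hcoreX := (hcore (X.image π1) (hXne.image π1) (Finset.card_image_le.trans hX.le)).1
  have hcoreXs :=
    (hcore (Xstar.image π1) (hXsne.image π1) (Finset.card_image_le.trans hXstar.le)).2
  have hoptXs := hopt ((Xstar.image π1).image π3) ((hXsne.image π1).image π3)
    (Finset.card_image_le.trans (Finset.card_image_le.trans hXstar.le))
  simp only [Finset.coe_image] at hcoreX hcoreXs hoptXs
  have hquant := coresetCost_le_of_quantized_le S Δ hw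
    ((X.finite_toSet.image π1).image π3) ((hXne.to_set.image π1).image π3)
    ((Xstar.finite_toSet.image π1).image π3) ((hXsne.to_set.image π1).image π3)
    hΓ hdiam hoptXs
  rw [hwsum] at hquant
  have hε2 : 0 < 1 - ε2 := by linarith
  rw [div_mul_eq_mul_div, div_mul_eq_mul_div, ← add_div, le_div_iff₀ hε2]
  calc kmeansCost P X * (1 - ε2)
      ≤ (1 + ε1) ^ 2 * ((1 - ε2) * projCost π1 P (π1 '' X)) := by
        nlinarith [le_mul_of_one_div_mul_le (by positivity) hJL1X.1]
    _ ≤ (1 + ε1) ^ 2 * ((1 + ε1') ^ 2 * coresetCost S Δ w π3 (π3 '' (π1 '' X))) := by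
        gcongr (1 + ε1) ^ 2 * ?_
        exact hcoreX.trans (le_mul_of_one_div_mul_le (by positivity) hJL2X.1)
    _ ≤ (1 + ε1) ^ 2 * ((1 + ε1') ^ 2 * ((1 + ε1') ^ 2 * ((1 + ε2) * ((1 + ε1) ^ 2 *
          kmeansCost P Xstar)) + n * (4 * ΔD * ΔQT))) := by
        gcongr
        refine hquant.trans (add_le_add_left (hJL2Xstar.2.trans ?_) _)
        gcongr
        exact hcoreXs.trans (by gcongr; exact hJL1Xstar.2)
    _ = _ := by ring

theorem stmt13 {d d1 d2 k n : ℕ} (hk : 1 ≤ k) {ε1 ε1' ε2 : ℝ}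
    (hε10 : 0 < ε1) (hε11 : ε1 < 1) (hε1'0 : 0 < ε1') (hε1'1 : ε1' < 1)
    (hε20 : 0 < ε2) (hε21 : ε2 < 1)
    (ΔD ΔQT : ℝ) (hΔD : 0 ≤ ΔD) (hΔQT : 0 ≤ ΔQT)
    (P : Finset (Pt d)) (hP : P.Nonempty) (hn : P.card = n)
    (X Xstar : Finset (Pt d)) (hX : X.card = k) (hXstar : Xstar.card = k)
    (π1 : Pt d → Pt d1) (π3 : Pt d1 → Pt d2)
    (S : Finset (Pt d1)) (hS : S.Nonempty) (w : Pt d1 → ℝ) (Δ : ℝ)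
    (hw : ∀ q ∈ S, 0 ≤ w q) (hwsum : (∑ q ∈ S, w q) = (n : ℝ))
    (hJL1X : (1 / (1 + ε1) ^ 2) * kmeansCost P (X : Set (Pt d)) ≤
        projCost π1 P (π1 '' (X : Set (Pt d))) ∧
      projCost π1 P (π1 '' (X : Set (Pt d))) ≤
        (1 + ε1) ^ 2 * kmeansCost P (X : Set (Pt d)))
    (hJL1Xstar : (1 / (1 + ε1) ^ 2) * kmeansCost P (Xstar : Set (Pt d)) ≤
        projCost π1 P (π1 '' (Xstar : Set (Pt d))) ∧
      projCost π1 P (π1 '' (Xstar : Set (Pt d))) ≤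
        (1 + ε1) ^ 2 * kmeansCost P (Xstar : Set (Pt d)))
    (hcore : ∀ Y : Finset (Pt d1), Y.Nonempty → Y.card ≤ k →
      (1 - ε2) * projCost π1 P (Y : Set (Pt d1)) ≤ coresetCost S Δ w id (Y : Set (Pt d1)) ∧
      coresetCost S Δ w id (Y : Set (Pt d1)) ≤ (1 + ε2) * projCost π1 P (Y : Set (Pt d1)))
    (hJL2X : (1 / (1 + ε1') ^ 2) * coresetCost S Δ w id (π1 '' (X : Set (Pt d))) ≤
        coresetCost S Δ w π3 (π3 '' (π1 '' (X : Set (Pt d)))) ∧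
      coresetCost S Δ w π3 (π3 '' (π1 '' (X : Set (Pt d)))) ≤
        (1 + ε1') ^ 2 * coresetCost S Δ w id (π1 '' (X : Set (Pt d))))
    (hJL2Xstar : (1 / (1 + ε1') ^ 2) * coresetCost S Δ w id (π1 '' (Xstar : Set (Pt d))) ≤
        coresetCost S Δ w π3 (π3 '' (π1 '' (Xstar : Set (Pt d)))) ∧
      coresetCost S Δ w π3 (π3 '' (π1 '' (Xstar : Set (Pt d)))) ≤
        (1 + ε1') ^ 2 * coresetCost S Δ w id (π1 '' (Xstar : Set (Pt d))))
    (Γ : Pt d1 → Pt d2)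
    (hΓ : ∀ q ∈ S, ‖π3 q - Γ q‖ ≤ ΔQT)
    (hdiam : ∀ q ∈ S, ∀ y ∈ (π3 '' (π1 '' (X : Set (Pt d))) ∪ π3 '' (π1 '' (Xstar : Set (Pt d)))),
      ‖π3 q - y‖ ≤ ΔD ∧ ‖Γ q - y‖ ≤ ΔD)
    (hopt : ∀ Y : Finset (Pt d2), Y.Nonempty → Y.card ≤ k →
      coresetCost S Δ w Γ (π3 '' (π1 '' (X : Set (Pt d)))) ≤
        coresetCost S Δ w Γ (Y : Set (Pt d2))) :
    kmeansCost P (X : Set (Pt d)) ≤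
      ((1 + ε1) ^ 4 * (1 + ε2) * (1 + ε1') ^ 4 / (1 - ε2)) * kmeansCost P (Xstar : Set (Pt d)) +
        ((1 + ε1) ^ 2 * (1 + ε1') ^ 2 / (1 - ε2)) * (4 * (n : ℝ) * ΔD * ΔQT) :=
  stmt13_general hk hε10 hε1'0 hε20 hε21 ΔD ΔQT P X Xstar hX hXstar π1 π3 S w Δ hw hwsum hJL1X
    hJL1Xstar hcore hJL2X hJL2Xstar Γ hΓ hdiam hopt
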